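/- arXiv:1504.03125 — 2 statements merged into one kernel-verified Lean document; each statement's English description precedes it below -/
import Mathlib

section
/- Let A be a Dedekind domain and m a maximal ideal of A. Then there exists an element g in A with g not in m such that the extension of m to the localization A_g = A[1/g] is a principal ideal. -/
/-! Choose `a ∈ m \ m ^ 2`. Then `(a) = m J` with `J ⊄ m`, so any `g ∈ J \ m` satisfies
`g m ⊆ (a)`; as `g` becomes a unit in `A_g`, this forces `m A_g = a A_g`. -/

namespace Ideal

variable {R : Type*} [CommRing R]

theorem map_algebraMap_away_eq_span_singleton {I : Ideal R} {a g : R} (S : Type*) [CommRing S]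
    [Algebra R S] [IsLocalization.Away g S] (ha : a ∈ I) (hg : ∀ x ∈ I, g * x ∈ span {a}) :
    I.map (algebraMap R S) = span {algebraMap R S a} := by
  have span_le_comap : span {a} ≤ (span {algebraMap R S a}).comap (algebraMap R S) :=
    (span_singleton_le_iff_mem _).mpr (mem_span_singleton_self _)
  refine le_antisymm (map_le_iff_le_comap.mpr fun x hx => ?_) ?_
  · rw [mem_comap, ← unit_mul_mem_iff_mem _ (IsLocalization.Away.algebraMap_isUnit g), ← map_mul]
    exact span_le_comap (hg x hx)
  · exact (span_singleton_le_iff_mem _).mpr (mem_map_of_mem _ ha)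

end Ideal

namespace IsDedekindDomain

variable {A : Type*} [CommRing A] [IsDedekindDomain A]

theorem exists_notMem_mul_mem_span_singleton {m : Ideal A} {a : A} (ha : a ∈ m)
    (ha2 : a ∉ m ^ 2) : ∃ g ∉ m, ∀ x ∈ m, g * x ∈ Ideal.span {a} := by
  obtain ⟨J, hJ⟩ : m ∣ Ideal.span {a} :=
    Ideal.dvd_iff_le.mpr ((Ideal.span_singleton_le_iff_mem _).mpr ha)
  have hJm : ¬ J ≤ m := fun hJm => ha2 <| by
    rw [pow_two, ← Ideal.span_singleton_le_iff_mem, hJ]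
    exact Ideal.mul_mono_right hJm
  obtain ⟨g, hgJ, hgm⟩ := SetLike.not_le_iff_exists.mp hJm
  refine ⟨g, hgm, fun x hx => ?_⟩
  rw [hJ, mul_comm g x]
  exact Ideal.mul_mem_mul hx hgJ

theorem exists_mem_notMem_mul_mem_span_singleton {m : Ideal A} (hm : m ≠ ⊤) :
    ∃ a ∈ m, ∃ g ∉ m, ∀ x ∈ m, g * x ∈ Ideal.span {a} := by
  by_cases hbot : m = ⊥
  · subst hbot
    exact ⟨0, Ideal.zero_mem _, 1, (Ideal.ne_top_iff_one _).mp hm, by simp⟩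
  obtain ⟨a, ham, ham2⟩ := SetLike.exists_of_lt (Ideal.pow_lt_self m hbot hm 2 le_rfl)
  exact ⟨a, ham, exists_notMem_mul_mem_span_singleton ham ham2⟩

end IsDedekindDomain

theorem dedekind_maximal_locally_principal_general (A : Type*) [CommRing A]
    [IsDedekindDomain A] (m : Ideal A) (hm : m.IsMaximal) :
    ∃ g : A, g ∉ m ∧
      (m.map (algebraMap A (Localization.Away g))).IsPrincipal := by
  obtain ⟨a, ha, g, hgm, hg⟩ :=
    IsDedekindDomain.exists_mem_notMem_mul_mem_span_singleton hm.ne_top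
  exact ⟨g, hgm, ⟨_, Ideal.map_algebraMap_away_eq_span_singleton _ ha hg⟩⟩

theorem dedekind_maximal_locally_principal (A : Type*) [CommRing A] [IsDomain A]
    [IsDedekindDomain A] (m : Ideal A) (hm : m.IsMaximal) :
    ∃ g : A, g ∉ m ∧
      (m.map (algebraMap A (Localization.Away g))).IsPrincipal :=
  dedekind_maximal_locally_principal_general A m hm
end

section
/- Let A be a Dedekind domain, a a unit of A, and m a maximal ideal of the polynomial ring A[t] containing t - a. Then there exists g ∈ A such that the principal ideal p = (g a⁻¹ t - 1) of A[t] satisfies: (1) p ⊆ m; (2) p + (t) = A[t]; and (3) the ideal m/p of A[t]/p is principal. -/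
/-!
Let `q` be the prime of `A` under `m`. If `q ≠ 0`, pick `x ∈ q \ q²`; then `(x) = q c` with `c`
coprime to `q`, which yields `g ∈ c` with `g ≡ 1 mod q` and `g q ⊆ (x)`. Modulo `p` the element `g`
is a unit (with inverse `a⁻¹ t`), so the image of `q` is generated by `x`. Finally
`m = q A[t] + (t - a)`, and modulo `p` we have `g (t - a) = a (1 - g)` with `1 - g ∈ q`, so the
image of `m` is `(x)` as well.
-/

open Polynomial Ideal

theorem Ideal.IsPrime.exists_sub_one_mem_and_mul_mem_span_singleton {A : Type*} [CommRing A]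
    [IsDedekindDomain A] {q : Ideal A} (hq : q.IsPrime) :
    ∃ x ∈ q, ∃ g, g - 1 ∈ q ∧ ∀ y ∈ q, g * y ∈ span {x} := by
  rcases eq_or_ne q ⊥ with rfl | hbot
  · exact ⟨0, zero_mem _, 1, by simp, fun y hy => by simp_all⟩
  have hqm := hq.isMaximal hbot
  obtain ⟨x, hxq, hxq2⟩ : ∃ x ∈ q, x ∉ q ^ 2 :=
    Set.exists_of_ssubset (q.pow_lt_self hbot hqm.ne_top 2 le_rfl)
  obtain ⟨c, hc⟩ : q ∣ span {x} := dvd_iff_le.mpr (span_singleton_le_iff_mem q |>.mpr hxq)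
  obtain ⟨g, hgc, hgq⟩ : ∃ g ∈ c, g ∉ q := Set.not_subset.mp fun hcq =>
    hxq2 <| pow_two q ▸ mul_mono_right hcq (hc ▸ mem_span_singleton_self x)
  obtain ⟨y, i, hi, hyg⟩ := hqm.exists_inv hgq
  refine ⟨x, hxq, y * g, ?_, fun z hz => ?_⟩
  · rw [show y * g - 1 = -i by linear_combination hyg]
    exact neg_mem hi
  · rw [hc, mul_comm (y * g)]
    exact mul_mem_mul hz (mul_mem_left _ _ hgc)

theorem map_mem_span_singleton_of_isUnit {A S : Type*} [CommRing A] [CommRing S] (φ : A →+* S)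
    {q : Ideal A} {x g : A} (hg : IsUnit (φ g)) (hgx : ∀ y ∈ q, g * y ∈ span {x})
    {y : A} (hy : y ∈ q) : φ y ∈ span {φ x} := by
  rw [mem_span_singleton, ← hg.dvd_mul_left, ← map_mul]
  exact map_dvd φ (mem_span_singleton.mp (hgx y hy))

namespace Polynomial

variable {A : Type*} [CommRing A]

theorem C_eval_mem_of_X_sub_C_mem {I : Ideal A[X]} {a : A} (ha : X - C a ∈ I) {f : A[X]}
    (hf : f ∈ I) : C (f.eval a) ∈ I := by
  obtain ⟨k, hk⟩ := X_sub_C_dvd_sub_C_eval (a := a) (p := f)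
  have := I.sub_mem hf (I.mul_mem_right k ha)
  rwa [← hk, sub_sub_cancel] at this

theorem map_le_span_singleton_of_X_sub_C_mem {S : Type*} [CommRing S] (φ : A[X] →+* S)
    {m : Ideal A[X]} {a : A} (ha : X - C a ∈ m) {s : S}
    (hC : ∀ y ∈ m.comap C, φ (C y) ∈ span {s}) (hX : φ (X - C a) ∈ span {s}) :
    m.map φ ≤ span {s} := by
  rw [map_le_iff_le_comap]
  intro f hf
  obtain ⟨k, hk⟩ := X_sub_C_dvd_sub_C_eval (a := a) (p := f)
  rw [mem_comap, show f = C (f.eval a) + (X - C a) * k by rw [← hk]; ring, map_add, map_mul]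
  exact add_mem (hC _ (C_eval_mem_of_X_sub_C_mem ha hf)) (mul_mem_right _ _ hX)

theorem C_mul_C_inv_mul_X_sub_one_mem {I : Ideal A[X]} {u : Aˣ} {g : A} (ha : X - C (u : A) ∈ I)
    (hg : C (g - 1) ∈ I) : C g * C ((u⁻¹ : Aˣ) : A) * X - 1 ∈ I := by
  have hu : C ((u⁻¹ : Aˣ) : A) * C (u : A) = 1 := by rw [← C_mul, Units.inv_mul, C_1]
  rw [show C g * C ((u⁻¹ : Aˣ) : A) * X - 1 =
      C g * C ((u⁻¹ : Aˣ) : A) * (X - C (u : A)) + C (g - 1) by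
    rw [map_sub, map_one]; linear_combination C g * hu]
  exact add_mem (mul_mem_left _ _ ha) hg

section Quotient

variable (u : Aˣ) (g : A)

local notation "π" => Ideal.Quotient.mk (span {C g * C ((u⁻¹ : Aˣ) : A) * X - 1})

theorem isUnit_mk_C : IsUnit (π (C g)) :=
  IsUnit.of_mul_eq_one (π (C ((u⁻¹ : Aˣ) : A) * X)) <| by
    rw [← map_mul (Ideal.Quotient.mk _), ← map_one π, Ideal.Quotient.mk_eq_mk_iff_sub_mem,
      ← mul_assoc]
    exact mem_span_singleton_self _

theorem mk_C_mul_mk_X_sub_C : π (C g) * π (X - C (u : A)) = π (C (u * (1 - g))) := by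
  rw [← map_mul (Ideal.Quotient.mk _), Ideal.Quotient.mk_eq_mk_iff_sub_mem, mem_span_singleton]
  refine ⟨C (u : A), ?_⟩
  have hu : C ((u⁻¹ : Aˣ) : A) * C (u : A) = 1 := by rw [← C_mul, Units.inv_mul, C_1]
  simp only [map_mul, map_sub, map_one]
  linear_combination -(C g * X) * hu

theorem map_mk_eq_span_singleton {m : Ideal A[X]} (ha : X - C (u : A) ∈ m) {x : A}
    (hx : x ∈ m.comap C) (hg : g - 1 ∈ m.comap C) (hgx : ∀ y ∈ m.comap C, g * y ∈ span {x}) :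
    m.map π = span {π (C x)} := by
  -- `(e :)` elaborates `e` before unifying with the expected type, avoiding a costly unfolding
  -- of the quotient map.
  have hC : ∀ y ∈ m.comap C, π (C y) ∈ span {π (C x)} := fun _ hy =>
    (map_mem_span_singleton_of_isUnit (RingHom.comp π C) (isUnit_mk_C u g) hgx hy :)
  refine le_antisymm (map_le_span_singleton_of_X_sub_C_mem π ha hC ?_) ?_
  · rw [mem_span_singleton, ← (isUnit_mk_C u g).dvd_mul_left, mk_C_mul_mk_X_sub_C]
    refine mem_span_singleton.mp (hC _ (mul_mem_left _ _ ?_))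
    simpa using neg_mem hg
  · rw [span_le, Set.singleton_subset_iff]
    exact mem_map_of_mem _ hx

end Quotient

end Polynomial

theorem exists_principal_prime_inside_maximal_general (A : Type*) [CommRing A]
    [IsDedekindDomain A] (a : Aˣ) (m : Ideal A[X]) (hm : m.IsMaximal)
    (ha : X - C (a : A) ∈ m) :
    ∃ g : A,
      Ideal.span {C g * C ((a⁻¹ : Aˣ) : A) * X - 1} ≤ m ∧
      Ideal.span {C g * C ((a⁻¹ : Aˣ) : A) * X - 1} ⊔ Ideal.span {(X : A[X])} = ⊤ ∧
      (m.map (Ideal.Quotient.mk (Ideal.span {C g * C ((a⁻¹ : Aˣ) : A) * X - 1}))).IsPrincipal := by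
  obtain ⟨x, hx, g, hg, hgx⟩ :=
    (hm.isPrime.comap C).exists_sub_one_mem_and_mul_mem_span_singleton
  exact ⟨g, span_singleton_le_iff_mem m |>.mpr (C_mul_C_inv_mul_X_sub_one_mem ha hg),
    (sup_eq_top_iff_isCoprime _ _).mpr ⟨-1, C g * C ((a⁻¹ : Aˣ) : A), by ring⟩,
    ⟨_, map_mk_eq_span_singleton a g ha hx hg hgx⟩⟩

theorem exists_principal_prime_inside_maximal (A : Type*) [CommRing A] [IsDomain A]
    [IsDedekindDomain A] (a : Aˣ) (m : Ideal A[X]) (hm : m.IsMaximal)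
    (ha : X - C (a : A) ∈ m) :
    ∃ g : A,
      Ideal.span {C g * C ((a⁻¹ : Aˣ) : A) * X - 1} ≤ m ∧
      Ideal.span {C g * C ((a⁻¹ : Aˣ) : A) * X - 1} ⊔ Ideal.span {(X : A[X])} = ⊤ ∧
      (m.map (Ideal.Quotient.mk (Ideal.span {C g * C ((a⁻¹ : Aˣ) : A) * X - 1}))).IsPrincipal :=
  exists_principal_prime_inside_maximal_general A a m hm ha
end
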